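/- In the unfolded flag-gadget circuit with R = 2t+1 repetitions, let (e₁ₛ, e₁f) and (e₂ₛ, e₂f) be error configurations, each of total weight at most t, producing the same observed flag pattern: F^c.mulVec e₁ₛ + e₁f = F^c.mulVec e₂ₛ + e₂f. Let e := e₁ₛ + e₂ₛ. Then the support of e can be partitioned into a set B of boundary locations together with two-element pairs such that: (i) for every p ∈ B, min(wt(D^c.mulVec δ_p), (w+1) − wt(D^c.mulVec δ_p)) ≤ 1, where δ_p is the standard basis vector at p; and (ii) for every pair {p, q}, wt(D^c.mulVec δ_p + D^c.mulVec δ_q) ≤ 1, i.e., the two locations of each pair straddle at most one data CNOT. -/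

import Mathlib

namespace Unfold

/-- The `R`-fold stack of an `m × w` matrix `H` over `ZMod 2`. -/
def stackMatrix (R m w : ℕ) (H : Matrix (Fin m) (Fin w) (ZMod 2)) :
    Matrix (Fin R × Fin m) (Fin w) (ZMod 2) :=
  fun p j => H p.2 j

/-- Lexicographic order on flag-qubit indices `Fin R × Fin m`. -/
def lexLt {R m : ℕ} (a b : Fin R × Fin m) : Prop :=
  a.1 < b.1 ∨ (a.1 = b.1 ∧ a.2 < b.2)

instance {R m : ℕ} (a b : Fin R × Fin m) : Decidable (lexLt a b) := by
  unfold lexLt; infer_instance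

/-- `truncFirst v k` is the indicator vector of the `k` smallest (in the lexicographic
order on `Fin R × Fin m`) nonzero coordinates of `v` (all of them if `k > wt v`). -/
def truncFirst {R m : ℕ} (v : Fin R × Fin m → ZMod 2) (k : ℕ) : Fin R × Fin m → ZMod 2 :=
  fun i =>
    if v i ≠ 0 ∧ (Finset.univ.filter fun j => v j ≠ 0 ∧ lexLt j i).card < k then 1 else 0

/-- The extended column sequence `F̃₀ = 0`, `F̃ᵢ = ` column `i` of the stack of `H` for
`1 ≤ i ≤ w`, `F̃_{w+1} = 0`. -/
def Ftil (R m w : ℕ) (H : Matrix (Fin m) (Fin w) (ZMod 2)) (i : Fin (w + 2)) :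
    Fin R × Fin m → ZMod 2 :=
  if h : 1 ≤ (i : ℕ) ∧ (i : ℕ) ≤ w then
    fun p => stackMatrix R m w H p ⟨(i : ℕ) - 1, by omega⟩
  else 0

/-- The unfolding block between `F̃ᵢ` and `F̃ᵢ₊₁`: the list of columns
`F̃ᵢ + [F̃ᵢ + F̃ᵢ₊₁][k]` for `k = 0, …, wt(F̃ᵢ + F̃ᵢ₊₁) − 1`. -/
def block (R m w : ℕ) (H : Matrix (Fin m) (Fin w) (ZMod 2)) (i : Fin (w + 1)) :
    List (Fin R × Fin m → ZMod 2) :=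
  (List.range (hammingNorm (Ftil R m w H i.castSucc + Ftil R m w H i.succ))).map
    fun k => Ftil R m w H i.castSucc + truncFirst (Ftil R m w H i.castSucc + Ftil R m w H i.succ) k

/-- The unfolded column sequence `c₀, …, c_L`: concatenation of the blocks followed by
the final zero column. -/
def cols (R m w : ℕ) (H : Matrix (Fin m) (Fin w) (ZMod 2)) :
    List (Fin R × Fin m → ZMod 2) :=
  ((List.finRange (w + 1)).flatMap fun i => block R m w H i) ++ [0]

/-- Number of syndrome-error locations, `L + 1`. -/
def N (R m w : ℕ) (H : Matrix (Fin m) (Fin w) (ZMod 2)) : ℕ := (cols R m w H).length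

/-- The physical parity-check matrix `F^c` whose `p`-th column is `c_p`. -/
def Fc (R m w : ℕ) (H : Matrix (Fin m) (Fin w) (ZMod 2)) :
    Matrix (Fin R × Fin m) (Fin (N R m w H)) (ZMod 2) :=
  fun r p => (cols R m w H).get p r

/-- `dpos i` is the index at which `F̃ᵢ` occurs as the `k = 0` element of its block,
i.e. the location of the data CNOT acting on data qubit `i`. -/
def dpos (R m w : ℕ) (H : Matrix (Fin m) (Fin w) (ZMod 2)) (i : Fin (w + 1)) : ℕ :=
  ∑ j ∈ Finset.univ.filter (fun j : Fin (w + 1) => j < i), (block R m w H j).length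

/-- The data-propagation matrix `D^c`: `D^c i p = 1` iff `p ≤ dᵢ`. -/
def Dc (R m w : ℕ) (H : Matrix (Fin m) (Fin w) (ZMod 2)) :
    Matrix (Fin (w + 1)) (Fin (N R m w H)) (ZMod 2) :=
  fun i p => if (p : ℕ) ≤ dpos R m w H i then 1 else 0

end Unfold

/-!
Fix a repetition `b`. On the flags of `b`, a column `F̃ᵢ + [F̃ᵢ + F̃ᵢ₊₁][k]` of the unfolded
circuit is the `b`-th copy of `F̃ᵢ` or of `F̃ᵢ₊₁`, except in the single repetition where the
truncation `[F̃ᵢ + F̃ᵢ₊₁][k]` is cut off. So in repetition `b` a fault at location `p` mimics an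
error on a data qubit `j`, and two locations mimicking the same `j` propagate through `D^c`
differently only across the `j`-th data CNOT. Each faulty location of `e = e₁ₛ + e₂ₛ` spoils at
most one repetition and the flags `F^c e = e₁f + e₂f` are raised in at most `wt(e₁f + e₂f)`
repetitions; that makes at most `2t` of the `2t + 1` repetitions, so some `b` is clean. There the
mimicked data errors add up to a vector of weight at most `2t` in the kernel of `H`, hence to
zero: each data qubit `1 ≤ j ≤ w` is mimicked an even number of times, so these locations pair
up, and the others, mimicking `j = 0` or `j = w + 1`, are boundary locations.
-/

open Finset Matrix

lemma ZMod.eq_one_of_ne_zero_two {x : ZMod 2} (hx : x ≠ 0) : x = 1 := by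
  revert x; decide

lemma hammingNorm_add_le {ι β : Type*} [Fintype ι] [AddMonoid β] [DecidableEq β]
    (x y : ι → β) : hammingNorm (x + y) ≤ hammingNorm x + hammingNorm y := by
  classical
  refine (card_le_card fun i hi => ?_).trans (card_union_le _ _)
  simp only [mem_filter, mem_union, mem_univ, true_and, Pi.add_apply] at hi ⊢
  by_contra! h
  exact hi (by rw [h.1, h.2, add_zero])

lemma hammingNorm_sum_le {ι α β : Type*} [Fintype ι] [AddCommMonoid β] [DecidableEq β]
    (s : Finset α) (x : α → ι → β) :
    hammingNorm (∑ a ∈ s, x a) ≤ ∑ a ∈ s, hammingNorm (x a) := by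
  classical
  induction s using Finset.induction_on with
  | empty => simp
  | insert a s ha ih =>
    rw [sum_insert ha, sum_insert ha]
    exact (hammingNorm_add_le _ _).trans (by omega)

lemma mulVec_eq_sum_col_of_ne_zero {ι κ : Type*} [Fintype κ] (A : Matrix ι κ (ZMod 2))
    (e : κ → ZMod 2) : A *ᵥ e = ∑ p with e p ≠ 0, fun r => A r p := by
  ext r
  simp only [mulVec, dotProduct, Finset.sum_apply, sum_filter]
  refine sum_congr rfl fun p _ => ?_
  by_cases hp : e p = 0
  · simp [hp]
  · simp [ZMod.eq_one_of_ne_zero_two hp]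

lemma List.exists_getElem_flatMap_finRange {β : Type*} {n : ℕ} (f : Fin n → List β) {p : ℕ}
    (hp : p < ((List.finRange n).flatMap f).length) :
    ∃ i : Fin n, ∃ k, ∃ hk : k < (f i).length,
      p = ∑ j with j < i, (f j).length + k ∧ ((List.finRange n).flatMap f)[p] = (f i)[k] := by
  induction n generalizing p with
  | zero => simp at hp
  | succ n ih =>
    simp only [List.finRange_succ, List.flatMap_cons, List.flatMap_map, List.length_append]
      at hp ⊢
    by_cases h0 : p < (f 0).length
    · exact ⟨0, p, h0, by simp, List.getElem_append_left h0⟩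
    · obtain ⟨i, k, hk, hpk, hget⟩ := ih (fun a => f a.succ) (p := p - (f 0).length) (by omega)
      refine ⟨i.succ, k, hk, ?_, ?_⟩
      · rw [sum_filter, Fin.sum_univ_succ, ← sum_filter] at *
        simp only [Fin.succ_pos, if_true, Fin.succ_lt_succ_iff] at hpk ⊢
        omega
      · rw [List.getElem_append_right (by omega)]
        exact hget

lemma sum_filter_lt_add_le {α : Type*} [LinearOrder α] [Fintype α] (g : α → ℕ) (i : α)
    {s : Finset α} (hs : ∀ j ≤ i, j ∈ s) :
    ∑ j with j < i, g j + g i ≤ ∑ j ∈ s, g j := by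
  rw [add_comm, ← sum_insert (by simp)]
  exact sum_le_sum_of_subset fun j hj => hs j (by
    simp only [mem_insert, mem_filter, mem_univ, true_and] at hj
    rcases hj with rfl | hj
    exacts [le_rfl, hj.le])

lemma exists_pairing_of_even_card_fibers {α β : Type*} [DecidableEq α] [DecidableEq β]
    (g : α → β) (s : Finset α) (hs : ∀ y, Even #{x ∈ s | g x = y}) :
    ∃ M : Finset (α × α), (∀ pq ∈ M, pq.1 ≠ pq.2 ∧ g pq.1 = g pq.2) ∧
      M.biUnion (fun pq => {pq.1, pq.2}) = s ∧
      ∀ pq ∈ M, ∀ pq' ∈ M, pq ≠ pq' →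
        Disjoint ({pq.1, pq.2} : Finset α) ({pq'.1, pq'.2} : Finset α) := by
  induction s using Finset.strongInduction with
  | H s ih =>
  obtain rfl | ⟨a, ha⟩ := s.eq_empty_or_nonempty
  · exact ⟨∅, by simp, by simp, by simp⟩
  have ha' : a ∈ s.filter (g · = g a) := mem_filter.2 ⟨ha, rfl⟩
  have hfibre : 1 < #(s.filter (g · = g a)) := by
    obtain ⟨k, hk⟩ := hs (g a)
    have := card_pos.2 ⟨a, ha'⟩
    omega
  obtain ⟨c, hc, hca⟩ := exists_mem_ne hfibre a
  obtain ⟨hcs, hgc⟩ := mem_filter.1 hc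
  set s' := (s.erase a).erase c
  have hs' : ∀ y, Even #{x ∈ s' | g x = y} := by
    intro y
    rw [filter_erase, filter_erase]
    by_cases hy : g a = y
    · subst hy
      rw [card_erase_of_mem (mem_erase.2 ⟨hca, hc⟩), card_erase_of_mem ha']
      rw [Nat.sub_sub]
      exact (Nat.even_sub (by omega)).2 (iff_of_true (hs _) even_two)
    · rw [erase_eq_of_notMem (by simp [hgc, hy]), erase_eq_of_notMem (by simp [hy])]
      exact hs y
  obtain ⟨M, hM, hMs, hMd⟩ :=
    ih s' ((erase_ssubset (mem_erase.2 ⟨hca, hcs⟩)).trans (erase_ssubset ha)) hs'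
  have hac : Disjoint ({a, c} : Finset α) s' := by
    simp [s', disjoint_insert_left, disjoint_singleton_left]
  have hpair : ∀ pq ∈ M, Disjoint ({a, c} : Finset α) {pq.1, pq.2} := fun pq hpq =>
    hac.mono_right (hMs ▸ subset_biUnion_of_mem (fun pq => ({pq.1, pq.2} : Finset α)) hpq)
  refine ⟨insert (a, c) M, ?_, ?_, ?_⟩
  · exact forall_mem_insert _ _ _ |>.2 ⟨⟨hca.symm, hgc.symm⟩, hM⟩
  · rw [biUnion_insert, hMs, insert_union, singleton_union, insert_erase (mem_erase.2 ⟨hca, hcs⟩),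
      insert_erase ha]
  · simp only [mem_insert]
    rintro pq (rfl | hpq) pq' (rfl | hpq') hne
    exacts [(hne rfl).elim, hpair pq' hpq', (hpair pq hpq).symm, hMd pq hpq pq' hpq' hne]

lemma exists_pairing_of_even_card_fibers_mem {α β : Type*} [DecidableEq α] [DecidableEq β]
    (g : α → β) (s : Finset α) (T : Finset β) (hs : ∀ y ∈ T, Even #{x ∈ s | g x = y}) :
    ∃ M : Finset (α × α), (∀ pq ∈ M, pq.1 ≠ pq.2 ∧ g pq.1 = g pq.2) ∧
      M.biUnion (fun pq => {pq.1, pq.2}) = {x ∈ s | g x ∈ T} ∧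
      ∀ pq ∈ M, ∀ pq' ∈ M, pq ≠ pq' →
        Disjoint ({pq.1, pq.2} : Finset α) ({pq'.1, pq'.2} : Finset α) := by
  refine exists_pairing_of_even_card_fibers g _ fun y => ?_
  rw [filter_filter]
  by_cases hy : y ∈ T
  · convert hs y hy using 3
    exact and_iff_right_of_imp (· ▸ hy)
  · rw [card_eq_zero.2 (filter_eq_empty_iff.2 fun x _ ⟨hx, hxy⟩ => hy (hxy ▸ hx))]
    exact Even.zero

lemma hammingNorm_add_add_mulVec_le {ι κ : Type*} [Fintype ι] [Fintype κ]
    (A : Matrix ι κ (ZMod 2)) {e₁ e₂ : κ → ZMod 2} {f₁ f₂ : ι → ZMod 2}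
    (h : A *ᵥ e₁ + f₁ = A *ᵥ e₂ + f₂) :
    hammingNorm (e₁ + e₂) + hammingNorm (A *ᵥ (e₁ + e₂)) ≤
      hammingNorm e₁ + hammingNorm f₁ + (hammingNorm e₂ + hammingNorm f₂) := by
  have hA : A *ᵥ (e₁ + e₂) = f₁ + f₂ := funext fun x => by
    have := congrFun h x
    simp only [mulVec_add, Pi.add_apply] at this ⊢
    grind
  have := hammingNorm_add_le e₁ e₂
  have := hammingNorm_add_le f₁ f₂
  rw [hA]
  omega

namespace Unfold

-- The `i`-th standard basis vector of `𝔽₂^w`, indexed from `1`; it is zero for `i = 0` and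
-- `i > w`, like `F̃₀` and `F̃_{w+1}`.
def unitVec (w i : ℕ) : Fin w → ZMod 2 := fun c => if (c : ℕ) + 1 = i then 1 else 0

lemma hammingNorm_unitVec_le (w i : ℕ) : hammingNorm (unitVec w i) ≤ 1 :=
  card_le_one.2 fun a ha b hb => by
    simp only [unitVec, mem_filter, mem_univ, true_and, ne_eq, ite_eq_right_iff,
      one_ne_zero, imp_false, not_not] at ha hb
    exact Fin.ext (by omega)

lemma unitVec_add_unitVec_succ_ne_zero {w i : ℕ} (hw : 1 ≤ w) (hi : i ≤ w) :
    unitVec w i + unitVec w (i + 1) ≠ 0 := by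
  intro h
  have := congrFun h ⟨i - 1, by omega⟩
  simp only [unitVec, Pi.add_apply, Pi.zero_apply] at this
  split_ifs at this <;> first | omega | exact one_ne_zero this

lemma unitVec_eq_zero_of_lt {w i : ℕ} (h : w < i) : unitVec w i = 0 := by
  ext c
  simp only [unitVec, Pi.zero_apply, ite_eq_right_iff, one_ne_zero, imp_false]
  omega

section truncFirst

variable {R m : ℕ} (v : Fin R × Fin m → ZMod 2) {k : ℕ}

lemma truncFirst_zero : truncFirst v 0 = 0 := by
  ext x
  simp [truncFirst]

lemma truncFirst_apply_eq_zero {b : Fin R} (hk : k ≤ #{x | v x ≠ 0 ∧ x.1 < b}) (r : Fin m) :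
    truncFirst v k (b, r) = 0 := by
  refine if_neg fun ⟨_, hlt⟩ => (hk.trans (card_le_card fun x hx => ?_)).not_gt hlt
  simp only [mem_filter, mem_univ, true_and] at hx ⊢
  exact ⟨hx.1, .inl hx.2⟩

lemma truncFirst_apply_eq_self {b : Fin R} (hk : #{x | v x ≠ 0 ∧ x.1 ≤ b} ≤ k) (r : Fin m) :
    truncFirst v k (b, r) = v (b, r) := by
  by_cases hv : v (b, r) = 0
  · exact (if_neg fun h => h.1 hv).trans hv.symm
  have hsub : ({x | v x ≠ 0 ∧ lexLt x (b, r)} : Finset _) ⊆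
      ({x | v x ≠ 0 ∧ x.1 ≤ b} : Finset _) := by
    intro x hx
    simp only [mem_filter, mem_univ, true_and] at hx ⊢
    exact ⟨hx.1, by rcases hx.2 with h | h; exacts [h.le, h.1.le]⟩
  have hlt := card_lt_card <| (ssubset_iff_of_subset hsub).2
    ⟨(b, r), by simpa using hv, by simp only [mem_filter]; simp [lexLt]⟩
  exact (if_pos ⟨hv, hlt.trans_le hk⟩).trans (ZMod.eq_one_of_ne_zero_two hv).symm

-- The thresholds `#{x | v x ≠ 0 ∧ x.1 ≤ b}` increase with `b`, so at most one repetition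
-- contains the cut-off of the first `k` nonzero coordinates.
lemma subsingleton_truncFirst_mixed (k : ℕ) :
    {b : Fin R | (∃ r, truncFirst v k (b, r) ≠ 0) ∧
      ∃ r, truncFirst v k (b, r) ≠ v (b, r)}.Subsingleton := by
  have hcut : ∀ b ∈ {b : Fin R | (∃ r, truncFirst v k (b, r) ≠ 0) ∧
      ∃ r, truncFirst v k (b, r) ≠ v (b, r)},
      #{x | v x ≠ 0 ∧ x.1 < b} < k ∧ k < #{x | v x ≠ 0 ∧ x.1 ≤ b} := by
    rintro b ⟨⟨r, hr⟩, ⟨r', hr'⟩⟩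
    exact ⟨not_le.1 fun h => hr (truncFirst_apply_eq_zero v h r),
      not_le.1 fun h => hr' (truncFirst_apply_eq_self v h r')⟩
  have hmono : ∀ {b b' : Fin R}, b < b' →
      #{x | v x ≠ 0 ∧ x.1 ≤ b} ≤ #{x | v x ≠ 0 ∧ x.1 < b'} := fun hb => by
    refine card_le_card fun x hx => ?_
    simp only [mem_filter, mem_univ, true_and] at hx ⊢
    exact ⟨hx.1, hx.2.trans_lt hb⟩
  intro b hb b' hb'
  have := hcut b hb
  have := hcut b' hb'
  by_contra hne
  rcases lt_or_gt_of_ne hne with h | h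
  · have := hmono h; omega
  · have := hmono h; omega

end truncFirst

variable {R m w : ℕ} (H : Matrix (Fin m) (Fin w) (ZMod 2))

lemma Ftil_apply (i : Fin (w + 2)) (b : Fin R) (r : Fin m) :
    Ftil R m w H i (b, r) = (H *ᵥ unitVec w i) r := by
  unfold Ftil
  split_ifs with hi
  · have : unitVec w i = Pi.single ⟨i - 1, by omega⟩ 1 := by
      ext c
      simp only [unitVec, Pi.single_apply, Fin.ext_iff]
      congr 1
      exact propext (by omega)
    rw [this, mulVec_single_one]
    rfl
  · have : unitVec w i = 0 := by
      ext c
      simp only [unitVec, Pi.zero_apply, ite_eq_right_iff, one_ne_zero, imp_false]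
      omega
    rw [this, mulVec_zero]
    rfl

lemma length_block (i : Fin (w + 1)) :
    (block R m w H i).length = hammingNorm (Ftil R m w H i.castSucc + Ftil R m w H i.succ) := by
  simp [block]

lemma getElem_block (i : Fin (w + 1)) (k : ℕ) (hk : k < (block R m w H i).length) :
    (block R m w H i)[k] =
      Ftil R m w H i.castSucc + truncFirst (Ftil R m w H i.castSucc + Ftil R m w H i.succ) k := by
  simp [block]

lemma Fc_apply_eq_zero_or_mem_block (p : Fin (N R m w H)) :
    ((p : ℕ) = ∑ i, (block R m w H i).length ∧ ∀ x, Fc R m w H x p = 0) ∨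
    ∃ i k, k < (block R m w H i).length ∧ (p : ℕ) = dpos R m w H i + k ∧
      ∀ x, Fc R m w H x p = Ftil R m w H i.castSucc x +
        truncFirst (Ftil R m w H i.castSucc + Ftil R m w H i.succ) k x := by
  have hN : (p : ℕ) < ((List.finRange (w + 1)).flatMap (block R m w H) ++ [0]).length := p.isLt
  have hFc : ∀ x, Fc R m w H x p =
      (((List.finRange (w + 1)).flatMap (block R m w H) ++ [0])[(p : ℕ)]'hN) x := fun x => rfl
  rw [List.length_append, List.length_singleton] at hN
  have htotal : ((List.finRange (w + 1)).flatMap (block R m w H)).length =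
      ∑ i, (block R m w H i).length := by
    rw [List.length_flatMap, Fin.sum_univ_def]
  by_cases hp : (p : ℕ) < ((List.finRange (w + 1)).flatMap (block R m w H)).length
  · obtain ⟨i, k, hk, hpk, hget⟩ := List.exists_getElem_flatMap_finRange (block R m w H) hp
    refine .inr ⟨i, k, hk, hpk, fun x => ?_⟩
    rw [hFc, List.getElem_append_left hp, hget, getElem_block]
    rfl
  · refine .inl ⟨by omega, fun x => ?_⟩
    rw [hFc, List.getElem_append_right (Nat.le_of_not_lt hp)]
    simp

lemma dpos_add_length_le_dpos {i i' : Fin (w + 1)} (h : i < i') :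
    dpos R m w H i + (block R m w H i).length ≤ dpos R m w H i' :=
  sum_filter_lt_add_le _ i fun j hj => mem_filter.2 ⟨mem_univ j, hj.trans_lt h⟩

lemma dpos_add_length_le_sum (i : Fin (w + 1)) :
    dpos R m w H i + (block R m w H i).length ≤ ∑ j, (block R m w H j).length :=
  sum_filter_lt_add_le _ i fun j _ => mem_univ j

-- A fault at `p` reaches the data qubits `i > j` and, depending on `p`, possibly qubit `j`.
variable (R) in
def AtDataSlot (p j : ℕ) : Prop :=
  ∀ i : Fin (w + 1), ((i : ℕ) < j → dpos R m w H i < p) ∧ (j < i → p ≤ dpos R m w H i)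

variable {H}

lemma atDataSlot_sum (hlen : ∀ i, 0 < (block R m w H i).length) :
    AtDataSlot R H (∑ i, (block R m w H i).length) (w + 1) := fun i =>
  ⟨fun _ => by have := dpos_add_length_le_sum (R := R) H i; have := hlen i; omega,
    fun h => by omega⟩

lemma atDataSlot_block (hlen : ∀ i, 0 < (block R m w H i).length) {i : Fin (w + 1)} {k : ℕ}
    (hk : k < (block R m w H i).length) : AtDataSlot R H (dpos R m w H i + k) i := fun i' =>
  ⟨fun h => by
    have := dpos_add_length_le_dpos (R := R) H (Fin.lt_def.2 h); have := hlen i'; omega,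
    fun h => by have := dpos_add_length_le_dpos (R := R) H (Fin.lt_def.2 h); omega⟩

lemma atDataSlot_block_succ {i : Fin (w + 1)} {k : ℕ} (hk₀ : 0 < k)
    (hk : k < (block R m w H i).length) : AtDataSlot R H (dpos R m w H i + k) (i + 1) := fun i' =>
  ⟨fun h => by
    obtain h | h := Nat.lt_succ_iff_lt_or_eq.1 h
    · have := dpos_add_length_le_dpos (R := R) H (Fin.lt_def.2 h); omega
    · rw [Fin.ext h]; omega,
    fun h => by
      have := dpos_add_length_le_dpos (R := R) H (Fin.lt_def.2 (by omega : (i : ℕ) < i'))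
      omega⟩

lemma mulVec_unitVec_add_unitVec_succ_ne_zero (hw : 1 ≤ w)
    (hH : ∀ v : Fin w → ZMod 2, v ≠ 0 → hammingNorm v ≤ 2 → H *ᵥ v ≠ 0) {i : ℕ} (hi : i ≤ w) :
    H *ᵥ (unitVec w i + unitVec w (i + 1)) ≠ 0 := by
  refine hH _ (unitVec_add_unitVec_succ_ne_zero hw hi) ?_
  have := hammingNorm_add_le (unitVec w i) (unitVec w (i + 1))
  have := hammingNorm_unitVec_le w i
  have := hammingNorm_unitVec_le w (i + 1)
  omega

def MimicsDataError (b : Fin R) (p : Fin (N R m w H)) (j : ℕ) : Prop :=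
  (∀ r, Fc R m w H (b, r) p = (H *ᵥ unitVec w j) r) ∧ AtDataSlot R H p j

section

variable (hH : ∀ i ≤ w, H *ᵥ (unitVec w i + unitVec w (i + 1)) ≠ 0)
include hH

lemma exists_Ftil_add_Ftil_ne_zero (i : Fin (w + 1)) (b : Fin R) :
    ∃ r, (Ftil R m w H i.castSucc + Ftil R m w H i.succ) (b, r) ≠ 0 := by
  obtain ⟨r, hr⟩ := Function.ne_iff.1 (hH i (by omega))
  exact ⟨r, by simpa [Ftil_apply, mulVec_add] using hr⟩

lemma length_block_pos (b : Fin R) (i : Fin (w + 1)) : 0 < (block R m w H i).length := by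
  obtain ⟨r, hr⟩ := exists_Ftil_add_Ftil_ne_zero hH i b
  rw [length_block, hammingNorm_pos_iff]
  exact fun h => hr (congrFun h (b, r))

lemma subsingleton_not_mimicsDataError (p : Fin (N R m w H)) :
    {b : Fin R | ¬ ∃ j, MimicsDataError b p j}.Subsingleton := by
  intro b hb b' hb'
  have hlen := length_block_pos hH b
  rcases Fc_apply_eq_zero_or_mem_block H p with ⟨hp, hcol⟩ | ⟨i, k, hk, hp, hcol⟩
  · refine (hb ⟨w + 1, fun r => ?_, hp ▸ atDataSlot_sum hlen⟩).elim
    rw [hcol, unitVec_eq_zero_of_lt (by omega), mulVec_zero]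
    rfl
  set v := Ftil R m w H i.castSucc + Ftil R m w H i.succ with hv
  have hmixed : ∀ c : Fin R, (¬ ∃ j, MimicsDataError c p j) →
      (∃ r, truncFirst v k (c, r) ≠ 0) ∧ ∃ r, truncFirst v k (c, r) ≠ v (c, r) := by
    intro c hc
    constructor
    · by_contra! h0
      refine hc ⟨i, fun r => ?_, hp ▸ atDataSlot_block hlen hk⟩
      rw [hcol, h0, add_zero, Ftil_apply]
      rfl
    · by_contra! h1
      have hk₀ : 0 < k := by
        obtain ⟨r, hr⟩ := exists_Ftil_add_Ftil_ne_zero hH i c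
        refine Nat.pos_of_ne_zero fun hk₀ => hr ((h1 r).symm.trans ?_)
        rw [hk₀, truncFirst_zero]
        rfl
      refine hc ⟨i + 1, fun r => ?_, hp ▸ atDataSlot_block_succ hk₀ hk⟩
      rw [hcol, h1, hv, Pi.add_apply, CharTwo.add_cancel_left, Ftil_apply]
      rfl
  exact subsingleton_truncFirst_mixed v k (hmixed b hb) (hmixed b' hb')

lemma exists_repetition_forall_mimicsDataError (e : Fin (N R m w H) → ZMod 2)
    (hR : hammingNorm e + hammingNorm (Fc R m w H *ᵥ e) < R) :
    ∃ b, (∀ p, e p ≠ 0 → ∃ j, MimicsDataError b p j) ∧ ∀ r, (Fc R m w H *ᵥ e) (b, r) = 0 := by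
  classical
  set bad := ((univ.filter (e · ≠ 0)).biUnion fun p =>
      univ.filter fun b => ¬ ∃ j, MimicsDataError b p j) ∪
    (univ.filter ((Fc R m w H *ᵥ e) · ≠ 0)).image Prod.fst
  have hcard : #bad < #(univ : Finset (Fin R)) := by
    calc #bad ≤ ∑ p with e p ≠ 0, 1 + hammingNorm (Fc R m w H *ᵥ e) := by
          refine (card_union_le _ _).trans (add_le_add (card_biUnion_le.trans
            (sum_le_sum fun p _ => card_le_one.2 fun b hb b' hb' => ?_)) card_image_le)
          exact subsingleton_not_mimicsDataError hH p (mem_filter.1 hb).2 (mem_filter.1 hb').2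
      _ < #(univ : Finset (Fin R)) := by simpa [hammingNorm] using hR
  obtain ⟨b, -, hb⟩ := exists_mem_notMem_of_card_lt_card hcard
  simp only [bad, mem_union, mem_biUnion, mem_image, mem_filter, mem_univ, true_and, not_or,
    not_exists, not_and, not_forall_not] at hb
  exact ⟨b, hb.1, fun r => by by_contra h; exact hb.2 (b, r) h rfl⟩

end

-- Over a repetition where every faulty location mimics a data error and no flag is raised, the
-- mimicked data errors add up to a vector in the kernel of `H`.
lemma even_card_mimicsDataError {e : Fin (N R m w H) → ZMod 2}
    (hH : ∀ v : Fin w → ZMod 2, v ≠ 0 → hammingNorm v ≤ hammingNorm e → H *ᵥ v ≠ 0)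
    {b : Fin R} {j : Fin (N R m w H) → ℕ} (hj : ∀ p, e p ≠ 0 → MimicsDataError b p (j p))
    (hb : ∀ r, (Fc R m w H *ᵥ e) (b, r) = 0) {y : ℕ} (hy₁ : 1 ≤ y) (hy : y ≤ w) :
    Even #{p | e p ≠ 0 ∧ j p = y} := by
  set v := ∑ p with e p ≠ 0, unitVec w (j p)
  have hHv : H *ᵥ v = 0 := by
    ext r
    have hcol := congrFun (mulVec_eq_sum_col_of_ne_zero (Fc R m w H) e) (b, r)
    rw [Finset.sum_apply] at hcol
    rw [mulVec_sum, Finset.sum_apply, Pi.zero_apply]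
    exact (sum_congr rfl fun p hp => ((hj p (mem_filter.1 hp).2).1 r).symm).trans
      (hcol.symm.trans (hb r))
  have hv : v = 0 := by
    by_contra hv
    refine hH v hv ?_ hHv
    calc hammingNorm v ≤ ∑ p with e p ≠ 0, hammingNorm (unitVec w (j p)) := hammingNorm_sum_le _ _
      _ ≤ ∑ p with e p ≠ 0, 1 := sum_le_sum fun p _ => hammingNorm_unitVec_le w _
      _ = hammingNorm e := by simp [hammingNorm]
  have := congrFun hv ⟨y - 1, by omega⟩
  simp only [v, Finset.sum_apply, Pi.zero_apply, unitVec, Nat.sub_add_cancel hy₁] at this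
  rw [sum_boole, filter_filter, ZMod.natCast_eq_zero_iff_even] at this
  simpa only [eq_comm] using this

lemma Dc_mulVec_single_apply (p : Fin (N R m w H)) (i : Fin (w + 1)) :
    (Dc R m w H *ᵥ Pi.single p 1) i = if (p : ℕ) ≤ dpos R m w H i then 1 else 0 := by
  rw [mulVec_single_one]
  rfl

lemma hammingNorm_Dc_add_le_one {p q : Fin (N R m w H)} {j : ℕ} (hp : AtDataSlot R H p j)
    (hq : AtDataSlot R H q j) :
    hammingNorm (Dc R m w H *ᵥ Pi.single p 1 + Dc R m w H *ᵥ Pi.single q 1) ≤ 1 := by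
  have hsupp : ∀ i, (Dc R m w H *ᵥ Pi.single p 1 + Dc R m w H *ᵥ Pi.single q 1) i ≠ 0 →
      (i : ℕ) = j := by
    intro i hi
    simp only [Pi.add_apply, Dc_mulVec_single_apply] at hi
    rcases lt_trichotomy (i : ℕ) j with h | h | h
    · simp [not_le.2 ((hp i).1 h), not_le.2 ((hq i).1 h)] at hi
    · exact h
    · simp [(hp i).2 h, (hq i).2 h, CharTwo.add_self_eq_zero] at hi
  exact card_le_one.2 fun a ha b hb =>
    Fin.ext ((hsupp a (mem_filter.1 ha).2).trans (hsupp b (mem_filter.1 hb).2).symm)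

lemma min_hammingNorm_Dc_le_one {p : Fin (N R m w H)} {j : ℕ} (hp : AtDataSlot R H p j)
    (hj : j = 0 ∨ w < j) :
    min (hammingNorm (Dc R m w H *ᵥ Pi.single p 1))
      (w + 1 - hammingNorm (Dc R m w H *ᵥ Pi.single p 1)) ≤ 1 := by
  rcases hj with rfl | hj
  · refine min_le_of_right_le ?_
    have hzero : #{i | ¬ (Dc R m w H *ᵥ Pi.single p 1) i ≠ 0} ≤ 1 := by
      refine card_le_one.2 fun a ha b hb => ?_
      have hpos : ∀ i : Fin (w + 1), ¬ (Dc R m w H *ᵥ Pi.single p 1) i ≠ 0 → i = 0 := by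
        intro i hi
        by_contra h0
        exact hi (by
          rw [Dc_mulVec_single_apply, if_pos ((hp i).2 (Fin.pos_iff_ne_zero.2 h0))]
          exact one_ne_zero)
      rw [hpos a (mem_filter.1 ha).2, hpos b (mem_filter.1 hb).2]
    have := card_filter_add_card_filter_not (s := univ)
      fun i => (Dc R m w H *ᵥ Pi.single p 1) i ≠ 0
    simp only [card_univ, Fintype.card_fin] at this
    unfold hammingNorm
    omega
  · refine min_le_of_left_le (Nat.le_of_eq ?_ |>.trans zero_le_one)
    refine hammingNorm_eq_zero.2 (funext fun i => ?_)
    rw [Dc_mulVec_single_apply, if_neg (not_le.2 ((hp i).1 (by omega)))]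
    rfl

end Unfold

open Unfold in
theorem same_flag_pattern_errors_pair_up_general (t m w : ℕ) (ht : 1 ≤ t)
    (hw : 1 ≤ w) (H : Matrix (Fin m) (Fin w) (ZMod 2))
    (hH : ∀ v : Fin w → ZMod 2, v ≠ 0 → hammingNorm v ≤ 2 * t → H.mulVec v ≠ 0)
    (e₁s e₂s : Fin (N (2 * t + 1) m w H) → ZMod 2)
    (e₁f e₂f : Fin (2 * t + 1) × Fin m → ZMod 2)
    (h₁ : hammingNorm e₁s + hammingNorm e₁f ≤ t)
    (h₂ : hammingNorm e₂s + hammingNorm e₂f ≤ t)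
    (hsame : (Fc (2 * t + 1) m w H).mulVec e₁s + e₁f
           = (Fc (2 * t + 1) m w H).mulVec e₂s + e₂f) :
    ∃ (B : Finset (Fin (N (2 * t + 1) m w H)))
      (M : Finset (Fin (N (2 * t + 1) m w H) × Fin (N (2 * t + 1) m w H))),
      (∀ pq ∈ M, pq.1 ≠ pq.2) ∧
      (Finset.univ.filter fun p => (e₁s + e₂s) p ≠ 0)
        = B ∪ M.biUnion (fun pq => {pq.1, pq.2}) ∧
      Disjoint B (M.biUnion fun pq => {pq.1, pq.2}) ∧
      (∀ pq ∈ M, ∀ pq' ∈ M, pq ≠ pq' →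
        Disjoint ({pq.1, pq.2} : Finset (Fin (N (2 * t + 1) m w H)))
          ({pq'.1, pq'.2} : Finset (Fin (N (2 * t + 1) m w H)))) ∧
      (∀ p ∈ B,
        min (hammingNorm ((Dc (2 * t + 1) m w H).mulVec (Pi.single p 1)))
          ((w + 1) - hammingNorm ((Dc (2 * t + 1) m w H).mulVec (Pi.single p 1))) ≤ 1) ∧
      (∀ pq ∈ M,
        hammingNorm ((Dc (2 * t + 1) m w H).mulVec (Pi.single pq.1 1) +
          (Dc (2 * t + 1) m w H).mulVec (Pi.single pq.2 1)) ≤ 1) := by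
  have hwt := hammingNorm_add_add_mulVec_le _ hsame
  obtain ⟨b, hmimic, hb⟩ := exists_repetition_forall_mimicsDataError
    (fun i hi => mulVec_unitVec_add_unitVec_succ_ne_zero hw
      (fun v hv h => hH v hv (h.trans (by omega))) hi) (e₁s + e₂s) (by omega)
  choose! j hj using hmimic
  set S := univ.filter fun p => (e₁s + e₂s) p ≠ 0
  obtain ⟨M, hM, hMs, hMd⟩ := exists_pairing_of_even_card_fibers_mem j S (Icc 1 w) fun y hy => by
    rw [filter_filter]
    exact even_card_mimicsDataError (fun v hv h => hH v hv (h.trans (by omega))) hj hb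
      (mem_Icc.1 hy).1 (mem_Icc.1 hy).2
  have hmem : ∀ pq ∈ M, pq.1 ∈ S ∧ pq.2 ∈ S := fun pq h => by
    have h := hMs ▸ subset_biUnion_of_mem (fun pq : _ × _ => ({pq.1, pq.2} : Finset _)) h
    simp only [insert_subset_iff, singleton_subset_iff, mem_filter] at h
    exact ⟨h.1.1, h.2.1⟩
  refine ⟨S.filter (j · ∉ Icc 1 w), M, fun pq h => (hM pq h).1, ?_, ?_, hMd, ?_, ?_⟩
  · rw [hMs, union_comm, filter_union_filter_not_eq]
  · exact hMs ▸ (disjoint_filter_filter_not S S _).symm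
  · intro p hp
    obtain ⟨hp, hj'⟩ := mem_filter.1 hp
    exact min_hammingNorm_Dc_le_one (hj p (mem_filter.1 hp).2).2
      (by simp only [mem_Icc] at hj'; omega)
  · intro pq h
    exact hammingNorm_Dc_add_le_one (hj _ (mem_filter.1 (hmem pq h).1).2).2
      ((hM pq h).2 ▸ (hj _ (mem_filter.1 (hmem pq h).2).2).2)

open Unfold in
/-- in the unfolded flag-gadget circuit with `R = 2t+1` repetitions, for two
error configurations of total weight at most `t` producing the same observed flag pattern,
the support of `e := e₁ₛ + e₂ₛ` partitions into boundary locations (each propagating, up to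
the stabilizer, to at most one data error) and two-element pairs each straddling at most
one data CNOT. -/
theorem same_flag_pattern_errors_pair_up (t m w : ℕ) (ht : 1 ≤ t) (hm : 1 ≤ m)
    (hw : 1 ≤ w) (H : Matrix (Fin m) (Fin w) (ZMod 2))
    (hH : ∀ v : Fin w → ZMod 2, v ≠ 0 → hammingNorm v ≤ 2 * t → H.mulVec v ≠ 0)
    (e₁s e₂s : Fin (N (2 * t + 1) m w H) → ZMod 2)
    (e₁f e₂f : Fin (2 * t + 1) × Fin m → ZMod 2)
    (h₁ : hammingNorm e₁s + hammingNorm e₁f ≤ t)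
    (h₂ : hammingNorm e₂s + hammingNorm e₂f ≤ t)
    (hsame : (Fc (2 * t + 1) m w H).mulVec e₁s + e₁f
           = (Fc (2 * t + 1) m w H).mulVec e₂s + e₂f) :
    ∃ (B : Finset (Fin (N (2 * t + 1) m w H)))
      (M : Finset (Fin (N (2 * t + 1) m w H) × Fin (N (2 * t + 1) m w H))),
      (∀ pq ∈ M, pq.1 ≠ pq.2) ∧
      (Finset.univ.filter fun p => (e₁s + e₂s) p ≠ 0)
        = B ∪ M.biUnion (fun pq => {pq.1, pq.2}) ∧
      Disjoint B (M.biUnion fun pq => {pq.1, pq.2}) ∧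
      (∀ pq ∈ M, ∀ pq' ∈ M, pq ≠ pq' →
        Disjoint ({pq.1, pq.2} : Finset (Fin (N (2 * t + 1) m w H)))
          ({pq'.1, pq'.2} : Finset (Fin (N (2 * t + 1) m w H)))) ∧
      (∀ p ∈ B,
        min (hammingNorm ((Dc (2 * t + 1) m w H).mulVec (Pi.single p 1)))
          ((w + 1) - hammingNorm ((Dc (2 * t + 1) m w H).mulVec (Pi.single p 1))) ≤ 1) ∧
      (∀ pq ∈ M,
        hammingNorm ((Dc (2 * t + 1) m w H).mulVec (Pi.single pq.1 1) +
          (Dc (2 * t + 1) m w H).mulVec (Pi.single pq.2 1)) ≤ 1) :=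
  same_flag_pattern_errors_pair_up_general t m w ht hw H hH e₁s e₂s e₁f e₂f h₁ h₂ hsame
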